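/- For every graph G with clique covering number θ(G) equal to its domination number γ(G) (i.e., G is decomposable), and every graph H, γ(G □ H) ≥ γ(G)·γ(H). -/

import Mathlib

open Finset

/-- `S` dominates `T`: every vertex of `T` is in the closed neighborhood of `S`. -/
def Dominates {V : Type*} (G : SimpleGraph V) (S T : Set V) : Prop :=
  ∀ t ∈ T, ∃ s ∈ S, s = t ∨ G.Adj s t

/-- The domination number of a finite graph. -/
noncomputable def domNum {V : Type*} [Fintype V] (G : SimpleGraph V) : ℕ :=
  sInf {n | ∃ D : Finset V, D.card = n ∧ Dominates G ↑D Set.univ}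

/-- A partition of the vertex set of `G` into `m` cliques. -/
structure CliquePartition {V : Type*} (G : SimpleGraph V) (m : ℕ) where
  parts : Fin m → Finset V
  disj : ∀ i j, i ≠ j → Disjoint (parts i) (parts j)
  cover : ∀ v, ∃ i, v ∈ parts i
  clique : ∀ i, G.IsClique ↑(parts i)

/-- The clique covering number: minimum number of cliques partitioning `V(G)`. -/
noncomputable def cliqueCoverNum {V : Type*} [Fintype V] (G : SimpleGraph V) : ℕ :=
  sInf {m | Nonempty (CliquePartition G m)}

section

variable {V W : Type*}

lemma Dominates.mono {G : SimpleGraph V} {S S' T : Set V} (h : Dominates G S T) (hS : S ⊆ S') :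
    Dominates G S' T := fun t ht => (h t ht).imp fun _ ⟨hs, hst⟩ => ⟨hS hs, hst⟩

lemma dominates_of_isClique {G : SimpleGraph V} {C : Set V} (hC : G.IsClique C) {v : V}
    (hv : v ∈ C) : Dominates G {v} C := fun t ht =>
  ⟨v, rfl, (eq_or_ne v t).imp_right fun hvt => hC hv ht hvt⟩

lemma exists_card_le_one_dominates_of_isClique {G : SimpleGraph V} {C : Finset V}
    (hC : G.IsClique (C : Set V)) : ∃ R : Finset V, #R ≤ 1 ∧ Dominates G R C := by
  rcases C.eq_empty_or_nonempty with rfl | ⟨v, hv⟩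
  · exact ⟨∅, by simp, fun t ht => by simp at ht⟩
  · exact ⟨{v}, by simp, by simpa using dominates_of_isClique hC hv⟩

section Finite

variable [Fintype V] (G : SimpleGraph V)

lemma domNum_le_card {D : Finset V} (hD : Dominates G D Set.univ) : domNum G ≤ #D :=
  Nat.sInf_le ⟨D, rfl, hD⟩

lemma exists_dominates_card_eq_domNum :
    ∃ D : Finset V, #D = domNum G ∧ Dominates G D Set.univ :=
  Nat.sInf_mem (s := {n | ∃ D : Finset V, #D = n ∧ Dominates G D Set.univ})
    ⟨Fintype.card V, univ, rfl, fun t _ => ⟨t, by simp, Or.inl rfl⟩⟩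

lemma nonempty_cliquePartition_cliqueCoverNum :
    Nonempty (CliquePartition G (cliqueCoverNum G)) := by
  refine Nat.sInf_mem (s := {m | Nonempty (CliquePartition G m)})
    ⟨Fintype.card V, ⟨fun i => {(Fintype.equivFin V).symm i}, ?_, ?_, ?_⟩⟩
  · intro i j hij
    simpa using hij
  · exact fun v => ⟨Fintype.equivFin V v, by simp⟩
  · simp

open Classical in
lemma domNum_le_card_add_card_filter_not_dominates {m : ℕ} (P : CliquePartition G m)
    (S : Finset V) : domNum G ≤ #S + #{i | ¬ Dominates G S (P.parts i)} := by
  set B : Finset (Fin m) := {i | ¬ Dominates G S (P.parts i)}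
  choose R hR_card hR_dom using fun i => exists_card_le_one_dominates_of_isClique (P.clique i)
  have hdom : Dominates G ↑(S ∪ B.biUnion R) Set.univ := by
    intro v _
    obtain ⟨i, hvi⟩ := P.cover v
    by_cases hi : i ∈ B
    · exact (hR_dom i).mono
        (coe_subset.2 ((subset_biUnion_of_mem R hi).trans subset_union_right)) v hvi
    · exact (by simpa [B] using hi : Dominates G S _).mono (coe_subset.2 subset_union_left) v hvi
  calc domNum G ≤ #(S ∪ B.biUnion R) := domNum_le_card G hdom
    _ ≤ #S + #(B.biUnion R) := card_union_le _ _
    _ ≤ #S + #B := by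
      have := card_biUnion_le_card_mul B R 1 fun i _ => hR_card i
      omega

open Classical in
lemma card_filter_dominates_le_card (P : CliquePartition G (domNum G)) (S : Finset V) :
    #{i | Dominates G S (P.parts i)} ≤ #S := by
  have := domNum_le_card_add_card_filter_not_dominates G P S
  have := card_filter_add_card_filter_not (s := (univ : Finset (Fin (domNum G))))
    fun i => Dominates G S (P.parts i)
  simp only [card_univ, Fintype.card_fin] at this
  omega

end Finite

noncomputable def column (D : Finset (V × W)) (h : W) : Finset V :=
  D.preimage (·, h) fun _ _ _ _ => congrArg Prod.fst

@[simp]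
lemma mem_column {D : Finset (V × W)} {h : W} {g : V} : g ∈ column D h ↔ (g, h) ∈ D :=
  mem_preimage

lemma sum_card_column_le [DecidableEq W] [Fintype W] (D : Finset (V × W)) :
    ∑ h, #(column D h) ≤ #D :=
  calc ∑ h, #(column D h) ≤ ∑ h, #(D.filter fun p => p.2 = h) :=
        sum_le_sum fun h _ => card_le_card_of_injOn (·, h)
          (fun _ hg => mem_filter.2 ⟨mem_column.1 hg, rfl⟩) fun _ _ _ _ => congrArg Prod.fst
    _ = #D := (card_eq_sum_card_fiberwise fun p _ => mem_univ p.2).symm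

/-- A vertex `(g, h)` with `g ∈ C` that the column at `h` does not dominate must be dominated
by some `(g, h') ∈ D` with `h'` adjacent to `h`, and then `g` dominates all of the clique `C`. -/
lemma dominates_setOf_column_dominates {G : SimpleGraph V} {H : SimpleGraph W}
    {D : Finset (V × W)} (hD : Dominates (G □ H) D Set.univ) {C : Set V} (hC : G.IsClique C) :
    Dominates H {h | Dominates G (column D h) C} Set.univ := by
  intro h _
  by_cases hh : Dominates G (column D h) C
  · exact ⟨h, hh, Or.inl rfl⟩
  obtain ⟨g, hgC, hg⟩ : ∃ g ∈ C, ∀ s, (s, h) ∈ D → ¬(s = g ∨ G.Adj s g) := by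
    simpa [Dominates] using hh
  obtain ⟨⟨s, h'⟩, hsD, hs⟩ := hD (g, h) trivial
  rcases hs with hs | hadj
  · cases hs
    exact absurd (Or.inl rfl) (hg g hsD)
  rcases SimpleGraph.boxProd_adj.1 hadj with ⟨hsg, rfl⟩ | ⟨hh'h, rfl⟩
  · exact absurd (Or.inr hsg) (hg s hsD)
  · exact ⟨h', dominates_of_isClique hC hgC |>.mono (by simpa using hsD), Or.inr hh'h⟩

end

/-- Bartsalkin–German: decomposable graphs (`θ(G) = γ(G)`) satisfy Vizing's conjecture. -/
theorem stmt5 {V : Type*} [Fintype V] (G : SimpleGraph V)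
    (hdec : cliqueCoverNum G = domNum G) :
    ∀ (W : Type) [Fintype W] (H : SimpleGraph W),
      domNum (G.boxProd H) ≥ domNum G * domNum H := by
  intro W _ H
  classical
  obtain ⟨P⟩ := hdec ▸ nonempty_cliquePartition_cliqueCoverNum G
  obtain ⟨D, hD_card, hD⟩ := exists_dominates_card_eq_domNum (G □ H)
  let r : Fin (domNum G) → W → Prop := fun i h => Dominates G (column D h) (P.parts i)
  calc domNum G * domNum H = ∑ _i : Fin (domNum G), domNum H := by simp
    _ ≤ ∑ i, #(univ.bipartiteAbove r i) := sum_le_sum fun i _ =>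
        domNum_le_card H (by simpa [r] using dominates_setOf_column_dominates hD (P.clique i))
    _ = ∑ h, #(univ.bipartiteBelow r h) := sum_card_bipartiteAbove_eq_sum_card_bipartiteBelow r
    _ ≤ ∑ h, #(column D h) := sum_le_sum fun h _ => card_filter_dominates_le_card G P _
    _ ≤ #D := sum_card_column_le D
    _ = domNum (G □ H) := hD_card
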